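/- arXiv:1810.13188 — 8 statements merged into one kernel-verified Lean document; each statement's English description precedes it below -/
import Mathlib

section
/- Let ξ̄ ∈ (ℝ_{>0})^𝐱 be an equilibrium of the competitive Lotka-Volterra system on a finite set 𝐱, i.e., r(x) = ∑_{y∈𝐱} α(x,y)·ξ̄(y) for all x ∈ 𝐱. Suppose θ_x > 0 satisfy the symmetry condition θ_x α(x,y) = θ_y α(y,x). Then for any solution ξ_t of dξ_t(x)/dt = [r(x) − ∑_{y∈𝐱} α(x,y)ξ_t(y)]·ξ_t(x) with ξ_t(x) ≥ 0, the Lyapunov functional L(ξ) = (1/2)∑_{x,y} θ_x α(x,y) ξ(x)ξ(y) − ∑_x θ_x r(x) ξ(x) satisfies dL(ξ_t)/dt = −∑_{x∈𝐱} θ_x·[r(x) − ∑_y α(x,y)ξ_t(y)]²·ξ_t(x) ≤ 0. -/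
/-!
Since `θ x * α x y` is symmetric, the gradient of the Lyapunov functional at `ξ` is
`-θ x * (r x - ∑ y, α x y * ξ y)`. Pairing it with the Lotka-Volterra vector field
`(r x - ∑ y, α x y * ξ y) * ξ x` gives `-∑ x, θ x * (r x - ∑ y, α x y * ξ y) ^ 2 * ξ x`,
which is nonpositive because `θ` and `ξ` are nonnegative.
-/

open Finset

theorem hasDerivAt_half_sum_mul_mul_of_symm {ι : Type*} [Fintype ι] {A : ι → ι → ℝ}
    (hA : ∀ x y, A x y = A y x) {f : ℝ → ι → ℝ} {f' : ι → ℝ} {t : ℝ}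
    (hf : ∀ x, HasDerivAt (fun s => f s x) (f' x) t) :
    HasDerivAt (fun s => (1 / 2) * ∑ x, ∑ y, A x y * f s x * f s y)
      (∑ x, f' x * ∑ y, A x y * f t y) t := by
  have hprod : HasDerivAt (fun s => (1 / 2) * ∑ x, ∑ y, A x y * f s x * f s y)
      ((1 / 2) * ∑ x, ∑ y, (A x y * f' x * f t y + A x y * f t x * f' y)) t :=
    .const_mul _ <| .fun_sum fun x _ => .fun_sum fun y _ =>
      ((hf x).const_mul (A x y)).mul (hf y)
  have hfirst : ∑ x, ∑ y, A x y * f' x * f t y = ∑ x, f' x * ∑ y, A x y * f t y := by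
    simp_rw [mul_sum]
    exact sum_congr rfl fun x _ => sum_congr rfl fun y _ => by ring
  have hsecond : ∑ x, ∑ y, A x y * f t x * f' y = ∑ x, f' x * ∑ y, A x y * f t y := by
    rw [sum_comm]
    simp_rw [mul_sum]
    exact sum_congr rfl fun x _ => sum_congr rfl fun y _ => by rw [hA]; ring
  refine hprod.congr_deriv ?_
  simp only [sum_add_distrib, hfirst, hsecond]
  ring

theorem stmt_2_general {ι : Type*} [Fintype ι] (r : ι → ℝ) (α : ι → ι → ℝ)
    (θ : ι → ℝ) (ξ : ℝ → ι → ℝ) (t : ℝ)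
    (hθ : ∀ x, 0 < θ x)
    (hsym : ∀ x y, θ x * α x y = θ y * α y x)
    (hpos : ∀ s x, 0 ≤ ξ s x)
    (hderiv : ∀ x, HasDerivAt (fun s => ξ s x)
      ((r x - ∑ y, α x y * ξ t y) * ξ t x) t) :
    HasDerivAt
      (fun s => (1 / 2) * ∑ x, ∑ y, θ x * α x y * ξ s x * ξ s y
        - ∑ x, θ x * r x * ξ s x)
      (-∑ x, θ x * (r x - ∑ y, α x y * ξ t y) ^ 2 * ξ t x) t ∧
    (-∑ x, θ x * (r x - ∑ y, α x y * ξ t y) ^ 2 * ξ t x) ≤ 0 := by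
  refine ⟨?_, neg_nonpos.mpr <| sum_nonneg fun x _ => ?_⟩
  · have hL := (hasDerivAt_half_sum_mul_mul_of_symm hsym hderiv).fun_sub
      (HasDerivAt.fun_sum (u := univ) fun x _ => (hderiv x).const_mul (θ x * r x))
    refine hL.congr_deriv ?_
    rw [← sum_sub_distrib, ← sum_neg_distrib]
    refine sum_congr rfl fun x _ => ?_
    simp only [mul_assoc, ← mul_sum]
    ring
  · have hθx := (hθ x).le
    have hξx := hpos t x
    positivity

/-- The Lyapunov functional of a symmetric competitive Lotka-Volterra system
decreases along nonnegative solutions. -/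
theorem stmt_2 {ι : Type*} [Fintype ι] (r : ι → ℝ) (α : ι → ι → ℝ)
    (θ ξbar : ι → ℝ) (ξ : ℝ → ι → ℝ) (t : ℝ)
    (hθ : ∀ x, 0 < θ x)
    (hξbar : ∀ x, 0 < ξbar x)
    (heq : ∀ x, r x = ∑ y, α x y * ξbar y)
    (hsym : ∀ x y, θ x * α x y = θ y * α y x)
    (hpos : ∀ s x, 0 ≤ ξ s x)
    (hderiv : ∀ x, HasDerivAt (fun s => ξ s x)
      ((r x - ∑ y, α x y * ξ t y) * ξ t x) t) :
    HasDerivAt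
      (fun s => (1 / 2) * ∑ x, ∑ y, θ x * α x y * ξ s x * ξ s y
        - ∑ x, θ x * r x * ξ s x)
      (-∑ x, θ x * (r x - ∑ y, α x y * ξ t y) ^ 2 * ξ t x) t ∧
    (-∑ x, θ x * (r x - ∑ y, α x y * ξ t y) ^ 2 * ξ t x) ≤ 0 :=
  stmt_2_general r α θ ξ t hθ hsym hpos hderiv
end

section
/- In the equal competition setting (f_{y,x} = r(y) − r(x)), suppose x^i is the unique minimiser of (|y − x^0| − |x^{i-1} − x^0|)/f_{y,x^{i-1}} over all y with f_{y,x^{i-1}} > 0, and suppose inductively that |x^i − x^0| > |x^{i-1} − x^0|. Then any y with f_{y,x^i} > 0 satisfies |y − x^0| > |x^i − x^0|; that is, each invasion step strictly increases the Hamming distance of the resident type to the initial type x^0. -/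
/-- Each invasion step strictly increases the Hamming distance of the resident
type to the initial type x⁰ (equal competition case). -/
theorem stmt_4 {n : ℕ} (r : (Fin n → Bool) → ℝ) (x0 xprev xi : Fin n → Bool)
    (hfi : r xprev < r xi)
    (hmin : ∀ y, r xprev < r y →
      ((hammingDist xi x0 : ℝ) - hammingDist xprev x0) / (r xi - r xprev)
        ≤ ((hammingDist y x0 : ℝ) - hammingDist xprev x0) / (r y - r xprev))
    (huniq : ∀ y, r xprev < r y →
      ((hammingDist y x0 : ℝ) - hammingDist xprev x0) / (r y - r xprev)
        = ((hammingDist xi x0 : ℝ) - hammingDist xprev x0) / (r xi - r xprev)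
      → y = xi)
    (hind : hammingDist xprev x0 < hammingDist xi x0) :
    ∀ y, r xi < r y → hammingDist xi x0 < hammingDist y x0 := by
  intro y hy
  have hprev : r xprev < r y := hfi.trans hy
  have hb : (0:ℝ) < r xi - r xprev := by linarith
  have hd : (0:ℝ) < r y - r xprev := by linarith
  have ha : (0:ℝ) < (hammingDist xi x0 : ℝ) - hammingDist xprev x0 := by
    have : (hammingDist xprev x0 : ℝ) < hammingDist xi x0 := by exact_mod_cast hind
    linarith
  have h := hmin y hprev
  rw [div_le_div_iff₀ hb hd] at h
  have hcast : ((hammingDist xi x0 : ℝ)) < hammingDist y x0 := by nlinarith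
  exact_mod_cast hcast
end

section
/- With invasion fitnesses f satisfying f_{z,x} = f_{z,y} + f_{y,x} (transitivity) and f_{y,x} > 0 iff r(y) > r(x), for any i ≥ 1: min over y∈ℍ^n with ρ_y > 0 of min over z∈ℍ^n with f_{z,𝐱} > 0 of (ρ_z + |z−y|)/f_{z,𝐱} equals min over y∈ℍ^n with f_{y,𝐱} > 0 of ρ_y/f_{y,𝐱}, provided that ρ_y = 0 implies f_{y,𝐱} ≤ 0, and ρ satisfies the triangle-type inequality ρ_y ≤ ρ_z + |z−y| for all y,z. -/
/-- The double minimum over targets y (with ρ_y > 0) and sources z (with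
positive invasion fitness) of (ρ_z + |z−y|)/f_z equals the single minimum of
ρ_y/f_y over fit types y. -/
theorem stmt_5 {n : ℕ} (ρ : (Fin n → Bool) → ℝ) (f : (Fin n → Bool) → ℝ)
    (hρ0 : ∀ y, 0 ≤ ρ y)
    (htri : ∀ y z, ρ y ≤ ρ z + hammingDist z y)
    (h0 : ∀ y, ρ y = 0 → f y ≤ 0)
    (hex : ∃ y, 0 < f y) :
    sInf {v : ℝ | ∃ y z, 0 < ρ y ∧ 0 < f z ∧
        v = (ρ z + hammingDist z y) / f z}
      = sInf {v : ℝ | ∃ y, 0 < f y ∧ v = ρ y / f y} := by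
  set A := {v : ℝ | ∃ y z, 0 < ρ y ∧ 0 < f z ∧
      v = (ρ z + hammingDist z y) / f z}
  set B := {v : ℝ | ∃ y, 0 < f y ∧ v = ρ y / f y}
  have hρpos : ∀ z, 0 < f z → 0 < ρ z := by
    intro z hz
    rcases lt_or_eq_of_le (hρ0 z) with h | h
    · exact h
    · exact absurd hz (not_lt.2 (h0 z h.symm))
  have hBA : B ⊆ A := by
    rintro v ⟨z, hz, rfl⟩
    exact ⟨z, z, hρpos z hz, hz, by simp⟩
  have hBne : B.Nonempty := by
    obtain ⟨y, hy⟩ := hex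
    exact ⟨ρ y / f y, y, hy, rfl⟩
  have hAne : A.Nonempty := hBne.mono hBA
  have hBbdd : BddBelow B := by
    refine ⟨0, ?_⟩
    rintro v ⟨z, hz, rfl⟩
    exact div_nonneg (hρ0 z) hz.le
  have hAbdd : BddBelow A := by
    refine ⟨0, ?_⟩
    rintro v ⟨y, z, _, hz, rfl⟩
    have : (0:ℝ) ≤ hammingDist z y := Nat.cast_nonneg _
    exact div_nonneg (by linarith [hρ0 z]) hz.le
  refine le_antisymm (csInf_le_csInf hAbdd hBne hBA) ?_
  refine le_csInf hAne ?_
  rintro v ⟨y, z, hy, hz, rfl⟩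
  have h1 : sInf B ≤ ρ z / f z := csInf_le hBbdd ⟨z, hz, rfl⟩
  have h2 : ρ z / f z ≤ (ρ z + hammingDist z y) / f z := by
    have : (0:ℝ) ≤ hammingDist z y := Nat.cast_nonneg _
    gcongr
    linarith
  exact h1.trans h2
end

section
/- Let Ω = {ξ ∈ (ℝ_{≥0})^{ℍ^n} : ξ(x) ≤ 2|r(x)|/α(x,x) for all x}. Suppose ξ ∈ Ω and ξ(x) = 2|r(x)|/α(x,x) for some x with r(x) ≠ 0. Then for all μ < μ₀ := min_y (2|r(y)|²/α(y,y)) · (2n·max_y b(y)|r(y)|/α(y,y))^{−1}, the right-hand side of the mutation Lotka-Volterra ODE at x, namely [r(x) − ∑_y α(x,y)ξ(y)]ξ(x) + μ∑_{y∼x} b(y)m(y,x)ξ(y) − μb(x)ξ(x), is strictly negative; hence Ω is forward invariant for the flow. -/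
lemma neighbor_exists' {n : ℕ} (y x : Fin n → Bool) (h : hammingDist y x = 1) :
    ∃ i : Fin n, y = Function.update x i (!(x i)) := by
  unfold hammingDist at h
  obtain ⟨i, hi⟩ := Finset.card_eq_one.mp h
  refine ⟨i, funext fun j => ?_⟩
  by_cases hj : j = i
  · subst hj
    have hmem : j ∈ Finset.filter (fun k => y k ≠ x k) Finset.univ := by
      rw [hi]; simp
    simp only [Finset.mem_filter, Finset.mem_univ, true_and] at hmem
    simp only [Function.update_self]
    cases hxj : x j <;> cases hyj : y j <;> simp_all
  · have hmem : j ∉ Finset.filter (fun k => y k ≠ x k) Finset.univ := by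
      rw [hi]; simpa using hj
    simp only [Finset.mem_filter, Finset.mem_univ, true_and, not_not] at hmem
    rw [Function.update_of_ne hj, hmem]

lemma sum_m_le' {n : ℕ} (m : (Fin n → Bool) → (Fin n → Bool) → ℝ)
    (hm0 : ∀ x y, 0 ≤ m x y) (hm1 : ∀ y, ∑ x, m y x ≤ 1)
    (hmsupp : ∀ y x, m y x ≠ 0 → hammingDist y x = 1) (x : Fin n → Bool) :
    ∑ y, m y x ≤ (n : ℝ) := by
  have key : ∀ y, m y x ≤
      ∑ i : Fin n, (if y = Function.update x i (!(x i)) then (1:ℝ) else 0) := by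
    intro y
    by_cases h : m y x = 0
    · rw [h]
      exact Finset.sum_nonneg fun i _ => by positivity
    · obtain ⟨i, hi⟩ := neighbor_exists' y x (hmsupp y x h)
      have h1 : m y x ≤ 1 :=
        le_trans (Finset.single_le_sum (fun z _ => hm0 y z) (Finset.mem_univ x)) (hm1 y)
      calc m y x ≤ 1 := h1
        _ = (if y = Function.update x i (!(x i)) then (1:ℝ) else 0) := by simp [hi]
        _ ≤ _ := Finset.single_le_sum (f := fun j =>
            (if y = Function.update x j (!(x j)) then (1:ℝ) else 0))
            (fun j _ => by positivity) (Finset.mem_univ i)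
  calc ∑ y, m y x
      ≤ ∑ y, ∑ i : Fin n, (if y = Function.update x i (!(x i)) then (1:ℝ) else 0) :=
        Finset.sum_le_sum fun y _ => key y
    _ = ∑ i : Fin n, ∑ y, (if y = Function.update x i (!(x i)) then (1:ℝ) else 0) :=
        Finset.sum_comm
    _ = ∑ _i : Fin n, (1:ℝ) := by
        refine Finset.sum_congr rfl fun i _ => ?_
        rw [Finset.sum_ite_eq' Finset.univ (Function.update x i (!(x i)))
          (fun _ => (1:ℝ))]
        simp
    _ = (n : ℝ) := by simp

/-- On the boundary of the box Ω, the right-hand side of the mutation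
Lotka-Volterra ODE points inwards for small μ; hence Ω is forward invariant. -/
theorem stmt_7 {n : ℕ} (b d : (Fin n → Bool) → ℝ)
    (α : (Fin n → Bool) → (Fin n → Bool) → ℝ)
    (m : (Fin n → Bool) → (Fin n → Bool) → ℝ) (μ : ℝ)
    (hb : ∀ x, 0 < b x) (hd : ∀ x, 0 < d x) (hα : ∀ x y, 0 < α x y)
    (hr : ∀ x, b x - d x ≠ 0)
    (hm0 : ∀ x y, 0 ≤ m x y) (hm1 : ∀ y, ∑ x, m y x ≤ 1)
    (hmsupp : ∀ y x, m y x ≠ 0 → hammingDist y x = 1)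
    (ξ : (Fin n → Bool) → ℝ)
    (hξ0 : ∀ y, 0 ≤ ξ y)
    (hΩ : ∀ y, ξ y ≤ 2 * |b y - d y| / α y y)
    (x : Fin n → Bool) (hx : ξ x = 2 * |b x - d x| / α x x)
    (hμ0 : 0 ≤ μ)
    (hμ : μ < (Finset.univ.inf' Finset.univ_nonempty
          fun y => 2 * |b y - d y| ^ 2 / α y y) /
        (2 * (n : ℝ) * Finset.univ.sup' Finset.univ_nonempty
          fun y => b y * |b y - d y| / α y y)) :
    ((b x - d x) - ∑ y, α x y * ξ y) * ξ x
      + μ * ∑ y, b y * m y x * ξ y - μ * b x * ξ x < 0 := by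
  set I := Finset.univ.inf' Finset.univ_nonempty
      fun y => 2 * |b y - d y| ^ 2 / α y y with hI_def
  set S := Finset.univ.sup' Finset.univ_nonempty
      fun y => b y * |b y - d y| / α y y with hS_def
  have hS0 : 0 < S := by
    have := Finset.le_sup' (fun y => b y * |b y - d y| / α y y) (Finset.mem_univ x)
    have hpos : 0 < b x * |b x - d x| / α x x := by
      exact div_pos (mul_pos (hb x) (abs_pos.mpr (hr x))) (hα x x)
    linarith
  by_cases hn : n = 0
  · subst hn
    norm_num at hμ
    linarith
  have hn0 : 0 < (n : ℝ) := by exact_mod_cast Nat.pos_of_ne_zero hn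
  have rpos : 0 < |b x - d x| := abs_pos.mpr (hr x)
  -- first term bound
  have hSx : 2 * |b x - d x| ≤ ∑ y, α x y * ξ y := by
    have h1 : α x x * ξ x ≤ ∑ y, α x y * ξ y :=
      Finset.single_le_sum (fun y _ => mul_nonneg (hα x y).le (hξ0 y)) (Finset.mem_univ x)
    have h2 : α x x * ξ x = 2 * |b x - d x| := by
      rw [hx, mul_div_assoc']
      exact mul_div_cancel_left₀ _ (hα x x).ne'
    linarith
  have hterm1 : ((b x - d x) - ∑ y, α x y * ξ y) * ξ x ≤ -(2 * |b x - d x| ^ 2 / α x x) := by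
    have hle : (b x - d x) - ∑ y, α x y * ξ y ≤ -|b x - d x| := by
      have := le_abs_self (b x - d x)
      linarith
    have := mul_le_mul_of_nonneg_right hle (hξ0 x)
    have heq : -|b x - d x| * ξ x = -(2 * |b x - d x| ^ 2 / α x x) := by
      rw [hx]; ring
    linarith
  have hI_le : I ≤ 2 * |b x - d x| ^ 2 / α x x :=
    Finset.inf'_le _ (Finset.mem_univ x)
  -- second term bound
  have hsum : ∑ y, b y * m y x * ξ y ≤ (n : ℝ) * (2 * S) := by
    have step1 : ∑ y, b y * m y x * ξ y ≤ ∑ y, m y x * (2 * S) := by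
      refine Finset.sum_le_sum fun y _ => ?_
      have hbξ : b y * ξ y ≤ 2 * S := by
        have h1 : b y * ξ y ≤ b y * (2 * |b y - d y| / α y y) :=
          mul_le_mul_of_nonneg_left (hΩ y) (hb y).le
        have h2 : b y * (2 * |b y - d y| / α y y) = 2 * (b y * |b y - d y| / α y y) := by
          ring
        have h3 : b y * |b y - d y| / α y y ≤ S := by
          rw [hS_def]
          exact Finset.le_sup' (fun y => b y * |b y - d y| / α y y) (Finset.mem_univ y)
        linarith
      calc b y * m y x * ξ y = m y x * (b y * ξ y) := by ring
        _ ≤ m y x * (2 * S) := mul_le_mul_of_nonneg_left hbξ (hm0 y x)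
    have step2 : ∑ y, m y x * (2 * S) = (∑ y, m y x) * (2 * S) := by
      rw [Finset.sum_mul]
    have step3 : (∑ y, m y x) * (2 * S) ≤ (n : ℝ) * (2 * S) :=
      mul_le_mul_of_nonneg_right (sum_m_le' m hm0 hm1 hmsupp x) (by linarith)
    linarith
  have hμI : μ * ((n : ℝ) * (2 * S)) < I := by
    have hden : 0 < 2 * (n : ℝ) * S := by positivity
    have := (lt_div_iff₀ hden).mp hμ
    nlinarith
  have hμsum : μ * ∑ y, b y * m y x * ξ y ≤ μ * ((n : ℝ) * (2 * S)) :=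
    mul_le_mul_of_nonneg_left hsum hμ0
  have hlast : 0 ≤ μ * b x * ξ x := by
    have := hξ0 x
    have := (hb x).le
    positivity
  linarith
end

section
/- Let ξ^{μ₁}_t, ξ^{μ₂}_t be two solutions of the mutation Lotka-Volterra system with mutation rates μ₁, μ₂ ∈ [0, μ₀) whose trajectories remain in the bounded set Ω. Then there exist finite constants A, B > 0 (depending only on b, r, α, n) such that for all t ≥ s ≥ 0: ‖ξ^{μ₁}_t − ξ^{μ₂}_t‖ ≤ e^{(t−s)A}·(‖ξ^{μ₁}_s − ξ^{μ₂}_s‖ + √((μ₁+μ₂)·B/A)). -/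
/-!
On the box `0 ≤ ξ ≤ M` the Lotka–Volterra vector field is Lipschitz in `ξ`, uniformly in the
mutation rate `μ ≤ μ₀`, and the mutation rates enter the difference of two fields only through
`μ₁ Q(ξ - η) + (μ₁ - μ₂) Q η`, where `Q` is the (linear) mutation operator and `Q η` is bounded
on the box. Hence `‖ξ₁ - ξ₂‖` satisfies `‖(ξ₁ - ξ₂)'‖ ≤ A ‖ξ₁ - ξ₂‖ + (μ₁ + μ₂) C`, and
Gronwall's inequality gives `‖ξ₁ t - ξ₂ t‖ ≤ e^{(t - s) A} (‖ξ₁ s - ξ₂ s‖ + (μ₁ + μ₂) C / A)`.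
Since `μ₁ + μ₂ < 2 μ₀`, the last term is at most `√((μ₁ + μ₂) B / A)` for
`B = (2 |μ₀| C² + 1) / A`.
-/

open Finset Real

section Estimates

variable {ι : Type*} [Fintype ι]

theorem abs_sum_mul_le_sum_abs_mul {w v c : ι → ℝ} (h : ∀ y, |v y| ≤ c y) :
    |∑ y, w y * v y| ≤ ∑ y, |w y| * c y :=
  (abs_sum_le_sum_abs _ _).trans <| sum_le_sum fun y _ => by
    rw [abs_mul]; exact mul_le_mul_of_nonneg_left (h y) (abs_nonneg _)

theorem abs_mul_le_mul_of_abs_le {a b A B : ℝ} (ha : |a| ≤ A) (hb : |b| ≤ B) :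
    |a * b| ≤ A * B := by
  rw [abs_mul]; exact mul_le_mul ha hb (abs_nonneg _) ((abs_nonneg _).trans ha)

theorem norm_toLp_two_eq_sqrt (v : ι → ℝ) : ‖WithLp.toLp 2 v‖ = √(∑ x, v x ^ 2) := by
  simp only [EuclideanSpace.norm_eq, Real.norm_eq_abs, sq_abs]

theorem norm_toLp_two_le_of_abs_le {v c : ι → ℝ} (h : ∀ x, |v x| ≤ c x) :
    ‖WithLp.toLp 2 v‖ ≤ ‖WithLp.toLp 2 c‖ := by
  simp only [norm_toLp_two_eq_sqrt]
  exact Real.sqrt_le_sqrt (sum_le_sum fun x _ => sq_le_sq.mpr ((h x).trans (le_abs_self _)))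

theorem norm_toLp_two_le_of_abs_le_mul_add {v K C : ι → ℝ} {d e : ℝ} (hd : 0 ≤ d) (he : 0 ≤ e)
    (h : ∀ x, |v x| ≤ K x * d + e * C x) :
    ‖WithLp.toLp 2 v‖ ≤ ‖WithLp.toLp 2 K‖ * d + e * ‖WithLp.toLp 2 C‖ := calc
  ‖WithLp.toLp 2 v‖ ≤ ‖d • WithLp.toLp 2 K + e • WithLp.toLp 2 C‖ :=
    norm_toLp_two_le_of_abs_le (c := fun x => d * K x + e * C x) fun x => by
      rw [mul_comm d]; exact h x
  _ ≤ ‖WithLp.toLp 2 K‖ * d + e * ‖WithLp.toLp 2 C‖ := by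
    refine (norm_add_le _ _).trans_eq ?_
    rw [norm_smul_of_nonneg hd, norm_smul_of_nonneg he, mul_comm d]

end Estimates

theorem norm_le_exp_mul_of_norm_deriv_le {E : Type*} [NormedAddCommGroup E] [NormedSpace ℝ E]
    {f f' : ℝ → E} {A ε s t : ℝ} (hA : 0 < A) (hε : 0 ≤ ε)
    (hf : ∀ u, s ≤ u → HasDerivAt f (f' u) u)
    (hbound : ∀ u, s ≤ u → ‖f' u‖ ≤ A * ‖f u‖ + ε) (hst : s ≤ t) :
    ‖f t‖ ≤ exp ((t - s) * A) * (‖f s‖ + ε / A) := by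
  have hgron := norm_le_gronwallBound_of_norm_deriv_right_le
    (fun u hu => (hf u hu.1).continuousAt.continuousWithinAt)
    (fun u hu => (hf u hu.1).hasDerivWithinAt) le_rfl (fun u hu => hbound u hu.1) t ⟨hst, le_rfl⟩
  rw [gronwallBound_of_K_ne_0 hA.ne'] at hgron
  rw [mul_comm (t - s)]
  have : 0 ≤ ε / A := div_nonneg hε hA.le
  linarith

theorem mul_div_le_sqrt_mul_div {μ C A B : ℝ} (hμ : 0 ≤ μ) (hA : 0 < A) (h : μ * C ^ 2 ≤ A * B) :
    μ * C / A ≤ √(μ * B / A) := by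
  refine (le_abs_self _).trans (Real.abs_le_sqrt ?_)
  calc (μ * C / A) ^ 2 = μ * (μ * C ^ 2) / A ^ 2 := by ring
    _ ≤ μ * (A * B) / A ^ 2 := by gcongr
    _ = μ * B / A := by field_simp

section MutationLotkaVolterra

variable {ι : Type*} [Fintype ι] (b r : ι → ℝ) (α m : ι → ι → ℝ)

def lvField (μ : ℝ) (ξ : ι → ℝ) (x : ι) : ℝ :=
  (r x - ∑ y, α x y * ξ y) * ξ x + μ * ∑ y, b y * m y x * ξ y - μ * b x * ξ x

def mutationOperator (ξ : ι → ℝ) (x : ι) : ℝ :=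
  ∑ y, b y * m y x * ξ y - b x * ξ x

def mutationBound (c : ι → ℝ) (x : ι) : ℝ :=
  ∑ y, |b y * m y x| * c y + |b x| * c x

def competitionLipschitz (M : ι → ℝ) (x : ι) : ℝ :=
  |r x| + (∑ y, |α x y|) * M x + ∑ y, |α x y| * M y

theorem lvField_eq (μ : ℝ) (ξ : ι → ℝ) (x : ι) :
    lvField b r α m μ ξ x = (r x - ∑ y, α x y * ξ y) * ξ x + μ * mutationOperator b m ξ x := by
  simp only [lvField, mutationOperator]; ring

variable {b r α m}

theorem mutationOperator_sub (ξ η : ι → ℝ) (x : ι) :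
    mutationOperator b m (ξ - η) x = mutationOperator b m ξ x - mutationOperator b m η x := by
  simp only [mutationOperator, Pi.sub_apply, mul_sub, sum_sub_distrib]; ring

theorem abs_mutationOperator_le {v c : ι → ℝ} (h : ∀ y, |v y| ≤ c y) (x : ι) :
    |mutationOperator b m v x| ≤ mutationBound b m c x := by
  refine (abs_sub _ _).trans (add_le_add (abs_sum_mul_le_sum_abs_mul h) ?_)
  rw [abs_mul]; exact mul_le_mul_of_nonneg_left (h x) (abs_nonneg _)

theorem mutationBound_const (d : ℝ) (x : ι) :
    mutationBound b m (fun _ => d) x = mutationBound b m 1 x * d := by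
  simp only [mutationBound, Pi.one_apply, mul_one, add_mul, sum_mul]

variable {M ξ η : ι → ℝ} {d : ℝ}

theorem abs_competition_sub_le (hξ : ∀ y, |ξ y| ≤ M y) (hη : ∀ y, |η y| ≤ M y)
    (hd : ∀ y, |ξ y - η y| ≤ d) (x : ι) :
    |(r x - ∑ y, α x y * ξ y) * ξ x - (r x - ∑ y, α x y * η y) * η x|
      ≤ competitionLipschitz r α M x * d := calc
  _ = |r x * (ξ x - η x) - (∑ y, α x y * (ξ y - η y)) * ξ x
        - (∑ y, α x y * η y) * (ξ x - η x)| := by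
    simp only [mul_sub, sum_sub_distrib]; ring_nf
  _ ≤ |r x| * d + (∑ y, |α x y| * d) * M x + (∑ y, |α x y| * M y) * d :=
    (abs_sub _ _).trans <| add_le_add ((abs_sub _ _).trans <| add_le_add
      (abs_mul_le_mul_of_abs_le le_rfl (hd x))
      (abs_mul_le_mul_of_abs_le (abs_sum_mul_le_sum_abs_mul hd) (hξ x)))
      (abs_mul_le_mul_of_abs_le (abs_sum_mul_le_sum_abs_mul hη) (hd x))
  _ = competitionLipschitz r α M x * d := by
    simp only [competitionLipschitz, ← sum_mul]; ring

theorem abs_mutation_sub_le {μ₁ μ₂ μ' : ℝ} (hμ₁ : 0 ≤ μ₁) (hμ₁' : μ₁ ≤ μ') (hμ₂ : 0 ≤ μ₂)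
    (hη : ∀ y, |η y| ≤ M y) (hd : ∀ y, |ξ y - η y| ≤ d) (x : ι) :
    |μ₁ * mutationOperator b m ξ x - μ₂ * mutationOperator b m η x|
      ≤ μ' * mutationBound b m 1 x * d + (μ₁ + μ₂) * mutationBound b m M x := calc
  _ = |μ₁ * mutationOperator b m (ξ - η) x + (μ₁ - μ₂) * mutationOperator b m η x| := by
    rw [mutationOperator_sub]; ring_nf
  _ ≤ μ' * mutationBound b m (fun _ => d) x + (μ₁ + μ₂) * mutationBound b m M x :=
    (abs_add_le _ _).trans <| add_le_add
      (abs_mul_le_mul_of_abs_le ((abs_of_nonneg hμ₁).trans_le hμ₁')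
        (abs_mutationOperator_le hd x))
      (abs_mul_le_mul_of_abs_le (abs_sub_le_iff.mpr ⟨by linarith, by linarith⟩)
        (abs_mutationOperator_le hη x))
  _ = μ' * mutationBound b m 1 x * d + (μ₁ + μ₂) * mutationBound b m M x := by
    rw [mutationBound_const]; ring

theorem abs_lvField_sub_le {μ₁ μ₂ μ' : ℝ} (hμ₁ : 0 ≤ μ₁) (hμ₁' : μ₁ ≤ μ') (hμ₂ : 0 ≤ μ₂)
    (hξ : ∀ y, |ξ y| ≤ M y) (hη : ∀ y, |η y| ≤ M y) (hd : ∀ y, |ξ y - η y| ≤ d) (x : ι) :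
    |lvField b r α m μ₁ ξ x - lvField b r α m μ₂ η x|
      ≤ (competitionLipschitz r α M x + μ' * mutationBound b m 1 x) * d
        + (μ₁ + μ₂) * mutationBound b m M x := calc
  _ = |((r x - ∑ y, α x y * ξ y) * ξ x - (r x - ∑ y, α x y * η y) * η x)
        + (μ₁ * mutationOperator b m ξ x - μ₂ * mutationOperator b m η x)| := by
    rw [lvField_eq, lvField_eq]; ring_nf
  _ ≤ competitionLipschitz r α M x * d
        + (μ' * mutationBound b m 1 x * d + (μ₁ + μ₂) * mutationBound b m M x) :=
    (abs_add_le _ _).trans <| add_le_add (abs_competition_sub_le hξ hη hd x)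
      (abs_mutation_sub_le hμ₁ hμ₁' hμ₂ hη hd x)
  _ = _ := by ring

theorem norm_lvField_sub_le {μ₁ μ₂ μ' : ℝ} (hμ₁ : 0 ≤ μ₁) (hμ₁' : μ₁ ≤ μ') (hμ₂ : 0 ≤ μ₂)
    (hξ : ∀ y, |ξ y| ≤ M y) (hη : ∀ y, |η y| ≤ M y) :
    ‖WithLp.toLp 2 (lvField b r α m μ₁ ξ - lvField b r α m μ₂ η)‖
      ≤ ‖WithLp.toLp 2 fun x => competitionLipschitz r α M x + μ' * mutationBound b m 1 x‖
          * ‖WithLp.toLp 2 (ξ - η)‖ + (μ₁ + μ₂) * ‖WithLp.toLp 2 (mutationBound b m M)‖ :=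
  norm_toLp_two_le_of_abs_le_mul_add (norm_nonneg _) (add_nonneg hμ₁ hμ₂) <|
    abs_lvField_sub_le hμ₁ hμ₁' hμ₂ hξ hη fun y => by
      simpa only [Real.norm_eq_abs, Pi.sub_apply] using
        PiLp.norm_apply_le (WithLp.toLp 2 (ξ - η)) y

end MutationLotkaVolterra

theorem stmt_8_general {n : ℕ} (b r : (Fin n → Bool) → ℝ)
    (α : (Fin n → Bool) → (Fin n → Bool) → ℝ)
    (m : (Fin n → Bool) → (Fin n → Bool) → ℝ) (μ₀ : ℝ) :
    ∃ A B : ℝ, 0 < A ∧ 0 < B ∧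
      ∀ (μ₁ μ₂ : ℝ) (ξ₁ ξ₂ : ℝ → (Fin n → Bool) → ℝ),
        0 ≤ μ₁ → μ₁ < μ₀ → 0 ≤ μ₂ → μ₂ < μ₀ →
        (∀ t, 0 ≤ t → ∀ x, 0 ≤ ξ₁ t x ∧ ξ₁ t x ≤ 2 * |r x| / α x x) →
        (∀ t, 0 ≤ t → ∀ x, 0 ≤ ξ₂ t x ∧ ξ₂ t x ≤ 2 * |r x| / α x x) →
        (∀ t, 0 ≤ t → ∀ x, HasDerivAt (fun s => ξ₁ s x)
          ((r x - ∑ y, α x y * ξ₁ t y) * ξ₁ t x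
            + μ₁ * ∑ y, b y * m y x * ξ₁ t y - μ₁ * b x * ξ₁ t x) t) →
        (∀ t, 0 ≤ t → ∀ x, HasDerivAt (fun s => ξ₂ s x)
          ((r x - ∑ y, α x y * ξ₂ t y) * ξ₂ t x
            + μ₂ * ∑ y, b y * m y x * ξ₂ t y - μ₂ * b x * ξ₂ t x) t) →
        ∀ s t : ℝ, 0 ≤ s → s ≤ t →
          Real.sqrt (∑ x, (ξ₁ t x - ξ₂ t x) ^ 2)
            ≤ Real.exp ((t - s) * A) *
              (Real.sqrt (∑ x, (ξ₁ s x - ξ₂ s x) ^ 2)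
                + Real.sqrt ((μ₁ + μ₂) * B / A)) := by
  set M : (Fin n → Bool) → ℝ := fun x => 2 * |r x| / α x x
  set K := ‖WithLp.toLp 2 fun x => competitionLipschitz r α M x + μ₀ * mutationBound b m 1 x‖
  set C := ‖WithLp.toLp 2 (mutationBound b m M)‖
  have hA : 0 < K + 1 := by positivity
  refine ⟨K + 1, (2 * |μ₀| * C ^ 2 + 1) / (K + 1), hA, by positivity, ?_⟩
  intro μ₁ μ₂ ξ₁ ξ₂ hμ₁ hμ₁₀ hμ₂ hμ₂₀ hΩ₁ hΩ₂ hD₁ hD₂ s t hs hst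
  have hbox : ∀ ξ : ℝ → (Fin n → Bool) → ℝ, (∀ t, 0 ≤ t → ∀ x, 0 ≤ ξ t x ∧ ξ t x ≤ M x) →
      ∀ u, 0 ≤ u → ∀ y, |ξ u y| ≤ M y := fun ξ hΩ u hu y =>
    (abs_of_nonneg (hΩ u hu y).1).trans_le (hΩ u hu y).2
  have hderiv : ∀ u, s ≤ u → HasDerivAt (fun v => WithLp.toLp 2 (ξ₁ v - ξ₂ v))
      (WithLp.toLp 2 (lvField b r α m μ₁ (ξ₁ u) - lvField b r α m μ₂ (ξ₂ u))) u := fun u hu =>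
    (PiLp.continuousLinearEquiv 2 ℝ _).symm.hasFDerivAt.comp_hasDerivAt u <|
      hasDerivAt_pi.mpr fun x => (hD₁ u (hs.trans hu) x).sub (hD₂ u (hs.trans hu) x)
  have hbound : ∀ u, s ≤ u →
      ‖WithLp.toLp 2 (lvField b r α m μ₁ (ξ₁ u) - lvField b r α m μ₂ (ξ₂ u))‖
        ≤ (K + 1) * ‖WithLp.toLp 2 (ξ₁ u - ξ₂ u)‖ + (μ₁ + μ₂) * C := fun u hu =>
    (norm_lvField_sub_le hμ₁ hμ₁₀.le hμ₂ (hbox ξ₁ hΩ₁ u (hs.trans hu))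
      (hbox ξ₂ hΩ₂ u (hs.trans hu))).trans (by gcongr; linarith)
  have hgron := norm_le_exp_mul_of_norm_deriv_le hA (by positivity) hderiv hbound hst
  simp only [norm_toLp_two_eq_sqrt, Pi.sub_apply] at hgron
  have hrate : (μ₁ + μ₂) * C / (K + 1)
      ≤ √((μ₁ + μ₂) * ((2 * |μ₀| * C ^ 2 + 1) / (K + 1)) / (K + 1)) :=
    mul_div_le_sqrt_mul_div (by positivity) hA <| by
      rw [mul_div_cancel₀ _ hA.ne']
      nlinarith [sq_nonneg C, le_abs_self μ₀]
  exact hgron.trans (by gcongr)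

/-- Continuity of solutions of the mutation Lotka-Volterra system in the
initial condition and in the mutation rate: a Gronwall estimate with constants
depending only on the parameters b, r, α, n. -/
theorem stmt_8 {n : ℕ} (b r : (Fin n → Bool) → ℝ)
    (α : (Fin n → Bool) → (Fin n → Bool) → ℝ)
    (m : (Fin n → Bool) → (Fin n → Bool) → ℝ) (μ₀ : ℝ)
    (hb : ∀ x, 0 < b x) (hα : ∀ x y, 0 < α x y)
    (hm0 : ∀ x y, 0 ≤ m x y)
    (hmsupp : ∀ y x, m y x ≠ 0 → hammingDist y x = 1) :
    ∃ A B : ℝ, 0 < A ∧ 0 < B ∧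
      ∀ (μ₁ μ₂ : ℝ) (ξ₁ ξ₂ : ℝ → (Fin n → Bool) → ℝ),
        0 ≤ μ₁ → μ₁ < μ₀ → 0 ≤ μ₂ → μ₂ < μ₀ →
        (∀ t, 0 ≤ t → ∀ x, 0 ≤ ξ₁ t x ∧ ξ₁ t x ≤ 2 * |r x| / α x x) →
        (∀ t, 0 ≤ t → ∀ x, 0 ≤ ξ₂ t x ∧ ξ₂ t x ≤ 2 * |r x| / α x x) →
        (∀ t, 0 ≤ t → ∀ x, HasDerivAt (fun s => ξ₁ s x)
          ((r x - ∑ y, α x y * ξ₁ t y) * ξ₁ t x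
            + μ₁ * ∑ y, b y * m y x * ξ₁ t y - μ₁ * b x * ξ₁ t x) t) →
        (∀ t, 0 ≤ t → ∀ x, HasDerivAt (fun s => ξ₂ s x)
          ((r x - ∑ y, α x y * ξ₂ t y) * ξ₂ t x
            + μ₂ * ∑ y, b y * m y x * ξ₂ t y - μ₂ * b x * ξ₂ t x) t) →
        ∀ s t : ℝ, 0 ≤ s → s ≤ t →
          Real.sqrt (∑ x, (ξ₁ t x - ξ₂ t x) ^ 2)
            ≤ Real.exp ((t - s) * A) *
              (Real.sqrt (∑ x, (ξ₁ s x - ξ₂ s x) ^ 2)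
                + Real.sqrt ((μ₁ + μ₂) * B / A)) :=
  stmt_8_general b r α m μ₀
end

section
/- Suppose a function F(y,z) = (|y−z| + ρ_z − f_{z,x}·Δ)/g(y) is minimised over pairs (y,z) with g(y) > 0, where ρ satisfies ρ_y ≤ ρ_z + |y−z| for all y,z, g(y) = f_{y,x'} > 0 depends only on y, and Δ > 0. If the minimum over z at the optimal y* is attained only at some z̄ ≠ y* with F(y*, z̄) < F(y*, y*), then f_{z̄,x} > f_{y*,x}; consequently z̄ (which has g(z̄) potentially positive) would give F(z̄, z̄) < F(y*, z̄), contradicting minimality when f_{z̄,x'} > 0 is implied. Hence under the transitivity f_{z,x'} = f_{z,x} − f_{x',x} > 0 whenever f_{z,x} > f_{y*,x} > f_{x',x}, the double minimum min_y min_z F(y,z) is attained at z = y. -/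
/-- Diagonalisation argument: the double minimum of
F(y,z) = (|z−y| + ρ_z − f_{z,x}·Δ)/f_{y,x'} over fit types y and arbitrary z is
attained on the diagonal z = y. -/
theorem stmt_13 {n : ℕ} (r ρ : (Fin n → Bool) → ℝ)
    (x x' : Fin n → Bool) (Δ : ℝ)
    (hΔ : 0 < Δ)
    (hρ0 : ∀ y, 0 ≤ ρ y)
    (htri : ∀ y z, ρ y ≤ ρ z + (hammingDist z y : ℝ))
    (hnum : ∀ z, 0 ≤ ρ z - (r z - r x) * Δ)
    (hx : r x < r x')
    (hex : ∃ y, r x' < r y) :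
    ∃ y, r x' < r y ∧ ∀ y' z, r x' < r y' →
      (ρ y - (r y - r x) * Δ) / (r y - r x')
        ≤ ((hammingDist z y' : ℝ) + ρ z - (r z - r x) * Δ) / (r y' - r x') := by
  classical
  obtain ⟨y0, hy0⟩ := hex
  set G : ((Fin n → Bool) × (Fin n → Bool)) → ℝ :=
    fun p => ((hammingDist p.2 p.1 : ℝ) + ρ p.2 - (r p.2 - r x) * Δ) / (r p.1 - r x')
    with hG
  obtain ⟨p, hp, hmin⟩ := Finset.exists_min_image
    (Finset.univ.filter (fun p : ((Fin n → Bool) × (Fin n → Bool)) => r x' < r p.1)) G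
    ⟨(y0, y0), by simp [hy0]⟩
  simp only [Finset.mem_filter, Finset.mem_univ, true_and] at hp
  have hgp : (0:ℝ) < r p.1 - r x' := by linarith
  have hminG : ∀ y' z, r x' < r y' → G p ≤ G (y', z) := by
    intro y' z hy'
    exact hmin (y', z) (by simp [hy'])
  by_cases hcase : G (p.1, p.1) ≤ G p
  · refine ⟨p.1, hp, fun y' z hy' => ?_⟩
    have := hminG y' z hy'
    have hdiag : G (p.1, p.1) = (ρ p.1 - (r p.1 - r x) * Δ) / (r p.1 - r x') := by
      simp [hG]
    rw [hdiag] at hcase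
    exact le_trans (le_trans hcase this) (le_of_eq rfl)
  · push_neg at hcase
    -- strict: G p < G (p.1, p.1); derive r p.1 < r p.2
    have hdiag : G (p.1, p.1) = (ρ p.1 - (r p.1 - r x) * Δ) / (r p.1 - r x') := by
      simp [hG]
    rw [hdiag, hG] at hcase
    have hnumlt : (hammingDist p.2 p.1 : ℝ) + ρ p.2 - (r p.2 - r x) * Δ
        < ρ p.1 - (r p.1 - r x) * Δ :=
      (div_lt_div_iff_of_pos_right hgp).mp hcase
    have htri' := htri p.1 p.2
    have hr12 : r p.1 < r p.2 := by nlinarith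
    have hz : r x' < r p.2 := lt_trans hp hr12
    refine ⟨p.2, hz, fun y' z hy' => ?_⟩
    have h1 : (ρ p.2 - (r p.2 - r x) * Δ) / (r p.2 - r x') ≤ G p := by
      rw [hG]
      have hd0 : (0:ℝ) ≤ (hammingDist p.2 p.1 : ℝ) := Nat.cast_nonneg _
      exact div_le_div₀ (by linarith [hnum p.2]) (by linarith) hgp (by linarith)
    exact le_trans h1 (hminG y' z hy')
end

section
/- In the limited-mutation-radius model with radius ℓ, if a type y ∈ ℍ^n is surrounded by a fitness valley of width at least ℓ+1 — i.e., for every path (y_0 = x^0, y_1, ..., y_m = y) in ℍ^n with consecutive steps at Hamming distance 1, there exists i ≤ m−(ℓ+1) such that r(y_i) > r(y_j) for all i < j < m — then y is not accessible: there is no path (y_0 = x^0, ..., y_m = y) with indices i_0 = 0 < i_1 < ... < i_k = m satisfying |i_j − i_{j−1}| ≤ ℓ for all 1 ≤ j ≤ k, r(y_{i_j}) > r(y_{i_{j−1}}) for 1 ≤ j < k, and r(y_{i_{j−1}}) > r(y_i) for i_{j−1} < i < i_j. -/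
/-- Non-crossing of fitness valleys (Corollary 6.4): if every path from x⁰ to y
contains a point of width-(ℓ+1) dominating fitness, then y is not accessible,
i.e. no admissible index-decorated path to y exists. -/
theorem stmt_14 {n : ℕ} (r : (Fin n → Bool) → ℝ)
    (x0 yend : Fin n → Bool) (ℓ : ℕ) (hℓ : 1 ≤ ℓ)
    (hvalley : ∀ (mlen : ℕ) (y : ℕ → (Fin n → Bool)),
      y 0 = x0 → y mlen = yend →
      (∀ j < mlen, hammingDist (y j) (y (j + 1)) = 1) →
      ∃ i, i + (ℓ + 1) ≤ mlen ∧ ∀ j, i < j → j < mlen → r (y j) < r (y i)) :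
    ¬ ∃ (mlen k : ℕ) (y : ℕ → (Fin n → Bool)) (idx : ℕ → ℕ),
      y 0 = x0 ∧ y mlen = yend ∧
      (∀ j < mlen, hammingDist (y j) (y (j + 1)) = 1) ∧
      idx 0 = 0 ∧ idx k = mlen ∧
      (∀ j < k, idx j < idx (j + 1)) ∧
      (∀ j, 1 ≤ j → j ≤ k → idx j - idx (j - 1) ≤ ℓ) ∧
      (∀ j, 1 ≤ j → j < k → r (y (idx (j - 1))) < r (y (idx j))) ∧
      (∀ j i, 1 ≤ j → j ≤ k → idx (j - 1) < i → i < idx j →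
        r (y i) < r (y (idx (j - 1)))) := by
  rintro ⟨mlen, k, y, idx, h0, hm, hstep, hi0, hik, hmono, hgap, hinc, hdom⟩
  obtain ⟨i, hiℓ, hval⟩ := hvalley mlen y h0 hm hstep
  classical
  have hex : ∃ j, j ≤ k ∧ i < idx j := ⟨k, le_refl k, by omega⟩
  obtain ⟨hjk, hij⟩ := Nat.find_spec hex
  set j := Nat.find hex with hj
  have hj1 : 1 ≤ j := by
    rcases Nat.eq_zero_or_pos j with h | h
    · exfalso; rw [h] at hij; omega
    · exact h
  have hle : idx (j - 1) ≤ i := by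
    by_contra hc
    push_neg at hc
    exact Nat.find_min hex (m := j - 1) (by omega) ⟨by omega, hc⟩
  have hstep' : idx (j - 1) < idx j := by
    have := hmono (j - 1) (by omega)
    have he : j - 1 + 1 = j := by omega
    rwa [he] at this
  have hgap' : idx j - idx (j - 1) ≤ ℓ := hgap j hj1 hjk
  have hjm : idx j < mlen := by omega
  have hjlt : j < k := by
    rcases lt_or_eq_of_le hjk with h | h
    · exact h
    · exfalso; rw [h, hik] at hjm; omega
  have A : r (y (idx j)) < r (y i) := hval _ hij hjm
  have B : r (y (idx (j - 1))) < r (y (idx j)) := hinc j hj1 hjlt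
  have C : r (y i) ≤ r (y (idx (j - 1))) := by
    rcases lt_or_eq_of_le hle with h | h
    · exact le_of_lt (hdom j i hj1 hjk h hij)
    · rw [h]
  linarith
end

section
/- Let ξ_t solve the Lotka-Volterra system on 𝐱 with equilibrium ξ̄ ∈ (ℝ_{>0})^𝐱 (i.e., r(x) = ∑_y α(x,y)ξ̄(y)), and suppose the weighted quadratic form with weights ζ(x) = ξ_t(x)/ξ̄(x) satisfies ∑_{x,y} ζ(x)θ_x α(x,y)u(x)u(y) ≥ (κ/2)‖u‖² for all u. Then ⟨ξ_t − ξ̄, F(ξ_t)⟩_𝐱 ≤ −(κ/2)‖ξ_t − ξ̄‖², where F_x(ξ) = [r(x) − ∑_y α(x,y)ξ(y)]ξ(x) and ⟨u,v⟩_𝐱 = ∑_x (θ_x/ξ̄(x))u(x)v(x). -/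
/-- The Lotka-Volterra drift term satisfies
⟨ξ − ξ̄, F(ξ)⟩_𝐱 ≤ −(κ/2)‖ξ − ξ̄‖² whenever the ξ/ξ̄-weighted quadratic form is
positive definite with constant κ/2. -/
theorem stmt_18 {ι : Type*} [Fintype ι] (r : ι → ℝ) (α : ι → ι → ℝ)
    (θ ξbar ξ : ι → ℝ) (κ : ℝ)
    (hθ : ∀ x, 0 < θ x) (hξbar : ∀ x, 0 < ξbar x) (hξ : ∀ x, 0 ≤ ξ x)
    (heq : ∀ x, r x = ∑ y, α x y * ξbar y)
    (hpd : ∀ u : ι → ℝ,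
      (κ / 2) * (∑ x, u x ^ 2)
        ≤ ∑ x, ∑ y, (ξ x / ξbar x) * θ x * α x y * u x * u y) :
    ∑ x, θ x / ξbar x * (ξ x - ξbar x) * ((r x - ∑ y, α x y * ξ y) * ξ x)
      ≤ -(κ / 2) * ∑ x, (ξ x - ξbar x) ^ 2 := by
  set u : ι → ℝ := fun x => ξ x - ξbar x with hu
  have key : ∑ x, θ x / ξbar x * (ξ x - ξbar x) * ((r x - ∑ y, α x y * ξ y) * ξ x)
      = -∑ x, ∑ y, (ξ x / ξbar x) * θ x * α x y * u x * u y := by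
    rw [← Finset.sum_neg_distrib]
    refine Finset.sum_congr rfl fun x _ => ?_
    rw [heq x, ← Finset.sum_sub_distrib, Finset.sum_mul, Finset.mul_sum, ← Finset.sum_neg_distrib]
    refine Finset.sum_congr rfl fun y _ => ?_
    simp only [hu]
    ring
  rw [key]
  have h := hpd u
  have : (κ / 2) * (∑ x, u x ^ 2) = (κ / 2) * ∑ x, (ξ x - ξbar x) ^ 2 := rfl
  linarith
end
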